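/- Let G be a connected cograph (a connected P4-free graph) and let X, Y ⊆ V(G) be connected vertex subsets with |X| = |Y|. Then the shortest distance d_CS(X, Y) between X and Y under the component sliding rule CS equals 0 if X = Y; equals 1 if X ≠ Y and X touches Y (i.e., X ∪ Y induces a connected subgraph); and equals 2 if X does not touch Y. In particular X and Y are always reconfigurable under CS. -/

import Mathlib

open scoped Classical

noncomputable section

/-- `U` induces a connected subgraph of `G`. -/
def IsConnSub {V : Type*} (G : SimpleGraph V) (U : Finset V) : Prop :=
  (G.induce (U : Set V)).Connected

/-- The set of connected components of a vertex subset `U`: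
maximal subsets of `U` inducing connected subgraphs. -/
def comps {V : Type*} [Fintype V] [DecidableEq V] (G : SimpleGraph V) (U : Finset V) :
    Finset (Finset V) :=
  Finset.univ.filter (fun C => C ⊆ U ∧ IsConnSub G C ∧
    ∀ D : Finset V, C ⊆ D → D ⊆ U → IsConnSub G D → D = C)

/-- The CC-multiset of `U`: the multiset of sizes of connected components of `U`. -/
def ccMultiset {V : Type*} [Fintype V] [DecidableEq V] (G : SimpleGraph V) (U : Finset V) :
    Multiset ℕ :=
  (comps G U).val.map Finset.card

/-- Adjacency under component jumping (CJ). -/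
def adjCJ {V : Type*} [Fintype V] [DecidableEq V] (G : SimpleGraph V) (U U' : Finset V) : Prop :=
  ccMultiset G U = ccMultiset G U' ∧
  (comps G U \ comps G U').card = 1 ∧ (comps G U' \ comps G U).card = 1

/-- Adjacency under component sliding (CS). -/
def adjCS {V : Type*} [Fintype V] [DecidableEq V] (G : SimpleGraph V) (U U' : Finset V) : Prop :=
  adjCJ G U U' ∧
  ∀ C ∈ comps G U \ comps G U', ∀ C' ∈ comps G U' \ comps G U, IsConnSub G (C ∪ C')

/-- Adjacency under CS1 (component sliding by one vertex). -/
def adjCS1 {V : Type*} [Fintype V] [DecidableEq V] (G : SimpleGraph V) (U U' : Finset V) : Prop :=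
  adjCS G U U' ∧
  ∀ C ∈ comps G U \ comps G U', ∀ C' ∈ comps G U' \ comps G U,
    (C \ C').card = 1 ∧ (C' \ C).card = 1

/-- Adjacency under token jumping (TJ). -/
def adjTJ {V : Type*} [DecidableEq V] (G : SimpleGraph V) (U U' : Finset V) : Prop :=
  (U \ U').card = 1 ∧ (U' \ U).card = 1

/-- `A` and `B` are reconfigurable under rule `R` keeping the CC-multiset equal to `M`. -/
def Reconf {V : Type*} [Fintype V] [DecidableEq V] (G : SimpleGraph V) (M : Multiset ℕ)
    (R : Finset V → Finset V → Prop) (A B : Finset V) : Prop :=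
  ∃ (ℓ : ℕ) (W : ℕ → Finset V), W 0 = A ∧ W ℓ = B ∧
    (∀ i ≤ ℓ, ccMultiset G (W i) = M) ∧ ∀ i < ℓ, R (W i) (W (i + 1))

end

/-- `G` is P4-free (a cograph): it contains no induced path on four vertices. -/
def P4Free {V : Type*} (G : SimpleGraph V) : Prop :=
  ¬ ∃ a b c d : V, a ≠ b ∧ a ≠ c ∧ a ≠ d ∧ b ≠ c ∧ b ≠ d ∧ c ≠ d ∧
    G.Adj a b ∧ G.Adj b c ∧ G.Adj c d ∧ ¬ G.Adj a c ∧ ¬ G.Adj a d ∧ ¬ G.Adj b d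

/-- `X` touches `Y`: `X ∪ Y` induces a connected subgraph. -/
def Touches {V : Type*} [DecidableEq V] (G : SimpleGraph V) (X Y : Finset V) : Prop :=
  IsConnSub G (X ∪ Y)

/-- Adjacency under CS between two single connected vertex subsets of equal size:
they differ and their union induces a connected subgraph. -/
def adjCSconn {V : Type*} [DecidableEq V] (G : SimpleGraph V) (U U' : Finset V) : Prop :=
  U ≠ U' ∧ IsConnSub G (U ∪ U')

/-- Adjacency under CS1 between two single connected vertex subsets of equal size:
CS-adjacent and they exchange exactly one vertex. -/
def adjCS1conn {V : Type*} [DecidableEq V] (G : SimpleGraph V) (U U' : Finset V) : Prop :=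
  adjCSconn G U U' ∧ (U \ U').card = 1 ∧ (U' \ U).card = 1

/-- The set of lengths of reconfiguration sequences of connected vertex subsets of size
`|X|` from `X` to `Y` with consecutive subsets adjacent under `R`; its infimum is the
shortest distance `d_R(X, Y)`. -/
def connSeqLengths {V : Type*} (G : SimpleGraph V) (R : Finset V → Finset V → Prop)
    (X Y : Finset V) : Set ℕ :=
  {ℓ | ∃ W : ℕ → Finset V, W 0 = X ∧ W ℓ = Y ∧
    (∀ i ≤ ℓ, IsConnSub G (W i) ∧ (W i).card = X.card) ∧
    ∀ i < ℓ, R (W i) (W (i + 1))}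

/-!
A connected cograph has diameter at most two: a shortest path of length three would be an
induced `P₄`. So if `X` and `Y` do not touch, some `v ∉ X ∪ Y` is adjacent to both, and growing
a connected set from `v` inside `X ∪ {v}` until it has `|X|` vertices gives a set `Z` touching
both `X` and `Y`; hence `X → Z → Y` is a CS-sequence of length two.
-/

open SimpleGraph

namespace IsConnSub

variable {V : Type*} {G : SimpleGraph V}

lemma nonempty {U : Finset V} (h : IsConnSub G U) : U.Nonempty := by
  obtain ⟨⟨u, hu⟩⟩ := Connected.nonempty h
  exact ⟨u, hu⟩

lemma singleton (v : V) : IsConnSub G {v} := by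
  rw [IsConnSub, Finset.coe_singleton]
  exact Connected.of_subsingleton

variable [DecidableEq V]

lemma union_of_mem {A B : Finset V} (hA : IsConnSub G A) (hB : IsConnSub G B) {v : V}
    (hvA : v ∈ A) (hvB : v ∈ B) : IsConnSub G (A ∪ B) := by
  rw [IsConnSub, Finset.coe_union]
  exact induce_union_connected hA.preconnected hB.preconnected ⟨v, hvA, hvB⟩

lemma union_of_adj {A B : Finset V} (hA : IsConnSub G A) (hB : IsConnSub G B) {a b : V}
    (ha : a ∈ A) (hb : b ∈ B) (hab : G.Adj a b) : IsConnSub G (A ∪ B) := by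
  rw [IsConnSub, Finset.coe_union]
  exact connected_induce_union hA.preconnected hB.preconnected ha hb hab

lemma insert_of_adj {U : Finset V} (hU : IsConnSub G U) {u v : V} (hu : u ∈ U)
    (hvu : G.Adj v u) : IsConnSub G (insert v U) := by
  rw [Finset.insert_eq]
  exact (singleton v).union_of_adj hU (Finset.mem_singleton_self v) hu hvu

lemma exists_adj_of_ssubset {S Z : Finset V} (hS : IsConnSub G S) (hZS : Z ⊂ S)
    (hZ : Z.Nonempty) : ∃ u ∈ S \ Z, ∃ z ∈ Z, G.Adj u z := by
  obtain ⟨z, hz⟩ := hZ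
  obtain ⟨u, huS, huZ⟩ := Finset.exists_of_ssubset hZS
  obtain ⟨p⟩ := hS.preconnected ⟨u, huS⟩ ⟨z, hZS.subset hz⟩
  obtain ⟨d, -, hd₁, hd₂⟩ :=
    p.exists_boundary_dart {w | w.val ∉ Z} huZ (by simpa using hz)
  exact ⟨d.fst, Finset.mem_sdiff.2 ⟨d.fst.2, hd₁⟩, d.snd, not_not.1 hd₂, d.adj⟩

lemma exists_subset_card_eq {S : Finset V} (hS : IsConnSub G S) {v : V} (hv : v ∈ S)
    {k : ℕ} (hk : 1 ≤ k) (hkS : k ≤ S.card) :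
    ∃ Z ⊆ S, v ∈ Z ∧ Z.card = k ∧ IsConnSub G Z := by
  induction k, hk using Nat.le_induction with
  | base => exact ⟨{v}, by simpa, by simp, by simp, singleton v⟩
  | succ k _ ih =>
    obtain ⟨Z, hZS, hvZ, rfl, hZ⟩ := ih (by omega)
    have hZS' : Z ⊂ S := hZS.ssubset_of_ne (by rintro rfl; omega)
    obtain ⟨u, hu, z, hz, huz⟩ := hS.exists_adj_of_ssubset hZS' ⟨v, hvZ⟩
    rw [Finset.mem_sdiff] at hu
    exact ⟨insert u Z, Finset.insert_subset hu.1 hZS, Finset.mem_insert_of_mem hvZ,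
      Finset.card_insert_of_notMem hu.2, hZ.insert_of_adj hz huz⟩

end IsConnSub

section connSeqLengths

variable {V : Type*} {G : SimpleGraph V} {R : Finset V → Finset V → Prop} {X Y Z : Finset V}

lemma zero_mem_connSeqLengths_self (hX : IsConnSub G X) : 0 ∈ connSeqLengths G R X X :=
  ⟨fun _ => X, rfl, rfl, fun _ _ => ⟨hX, rfl⟩, fun _ h => absurd h (Nat.not_lt_zero _)⟩

lemma eq_of_zero_mem_connSeqLengths (h : 0 ∈ connSeqLengths G R X Y) : X = Y := by
  obtain ⟨W, hW₀, hW, -, -⟩ := h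
  exact hW₀ ▸ hW

lemma rel_of_one_mem_connSeqLengths (h : 1 ∈ connSeqLengths G R X Y) : R X Y := by
  obtain ⟨W, hW₀, hW₁, -, hR⟩ := h
  simpa [hW₀, hW₁] using hR 0 Nat.one_pos

lemma succ_mem_connSeqLengths (hX : IsConnSub G X) (hXZ : X.card = Z.card) (hR : R X Z)
    {ℓ : ℕ} (h : ℓ ∈ connSeqLengths G R Z Y) : ℓ + 1 ∈ connSeqLengths G R X Y := by
  obtain ⟨W, hW₀, hWℓ, hWconn, hWR⟩ := h
  refine ⟨fun i => if i = 0 then X else W (i - 1), rfl, by simpa using hWℓ, ?_, ?_⟩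
  · rintro (_ | i) hi
    · exact ⟨hX, rfl⟩
    · simpa [hXZ] using hWconn i (by omega)
  · rintro (_ | i) hi
    · simpa [hW₀] using hR
    · simpa using hWR i (by omega)

end connSeqLengths

namespace P4Free

variable {V : Type*} {G : SimpleGraph V}

lemma eq_or_adj_or_exists_common_adj (hP4 : P4Free G) (hconn : G.Connected) (x y : V) :
    x = y ∨ G.Adj x y ∨ ∃ z, G.Adj x z ∧ G.Adj z y := by
  obtain ⟨w⟩ := hconn.preconnected x y
  induction w with
  | nil => exact Or.inl rfl
  | @cons x b y hxb p ih =>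
    rcases ih with rfl | hby | ⟨z, hbz, hzy⟩
    · exact Or.inr (Or.inl hxb)
    · exact Or.inr (Or.inr ⟨b, hxb, hby⟩)
    · by_cases hxy : x = y
      · exact Or.inl hxy
      by_cases hxy' : G.Adj x y
      · exact Or.inr (Or.inl hxy')
      by_cases hxz : x = z
      · exact Or.inr (Or.inl (hxz ▸ hzy))
      by_cases hxz' : G.Adj x z
      · exact Or.inr (Or.inr ⟨z, hxz', hzy⟩)
      by_cases hby : b = y
      · exact Or.inr (Or.inl (hby ▸ hxb))
      by_cases hby' : G.Adj b y
      · exact Or.inr (Or.inr ⟨b, hxb, hby'⟩)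
      exact absurd ⟨x, b, z, y, hxb.ne, hxz, hxy, hbz.ne, hby, hzy.ne, hxb, hbz, hzy, hxz', hxy',
        hby'⟩ hP4

lemma exists_adjCSconn_adjCSconn [DecidableEq V] (hP4 : P4Free G) (hconn : G.Connected)
    {X Y : Finset V} (hX : IsConnSub G X) (hY : IsConnSub G Y) (hXY : ¬ Touches G X Y) :
    ∃ Z, IsConnSub G Z ∧ Z.card = X.card ∧ adjCSconn G X Z ∧ adjCSconn G Z Y := by
  obtain ⟨x, hx⟩ := hX.nonempty
  obtain ⟨y, hy⟩ := hY.nonempty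
  rcases hP4.eq_or_adj_or_exists_common_adj hconn x y with rfl | hxy | ⟨v, hxv, hvy⟩
  · exact absurd (hX.union_of_mem hY hx hy) hXY
  · exact absurd (hX.union_of_adj hY hx hy hxy) hXY
  have hvX : v ∉ X := fun hv => hXY (hX.union_of_adj hY hv hy hvy)
  have hvY : v ∉ Y := fun hv => hXY (hX.union_of_adj hY hx hv hxv)
  have hS : IsConnSub G (insert v X) := hX.insert_of_adj hx hxv.symm
  obtain ⟨Z, hZS, hvZ, hZcard, hZ⟩ := hS.exists_subset_card_eq (Finset.mem_insert_self v X)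
    (Finset.card_pos.2 ⟨x, hx⟩) (Finset.card_le_card (Finset.subset_insert v X))
  have hXZ : X ∪ Z = insert v X :=
    Finset.Subset.antisymm (Finset.union_subset (Finset.subset_insert v X) hZS)
      (Finset.insert_subset (Finset.mem_union_right X hvZ) Finset.subset_union_left)
  exact ⟨Z, hZ, hZcard, ⟨fun h => hvX (h ▸ hvZ), hXZ ▸ hS⟩,
    ⟨fun h => hvY (h ▸ hvZ), hZ.union_of_adj hY hvZ hy hvy⟩⟩

end P4Free

theorem stmt7_general {V : Type*} [DecidableEq V] (G : SimpleGraph V)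
    (hconn : G.Connected) (hP4 : P4Free G) (X Y : Finset V)
    (hX : IsConnSub G X) (hY : IsConnSub G Y) (hcard : X.card = Y.card) :
    (connSeqLengths G (adjCSconn G) X Y).Nonempty ∧
    sInf (connSeqLengths G (adjCSconn G) X Y) =
      (if X = Y then 0 else if Touches G X Y then 1 else 2) := by
  suffices h : IsLeast (connSeqLengths G (adjCSconn G) X Y)
      (if X = Y then 0 else if Touches G X Y then 1 else 2) from ⟨⟨_, h.1⟩, h.csInf_eq⟩
  split_ifs with hXY hT
  · subst hXY
    exact ⟨zero_mem_connSeqLengths_self hX, fun _ _ => Nat.zero_le _⟩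
  · refine ⟨succ_mem_connSeqLengths hX hcard ⟨hXY, hT⟩ (zero_mem_connSeqLengths_self hY),
      fun ℓ hℓ => Nat.one_le_iff_ne_zero.2 ?_⟩
    rintro rfl
    exact hXY (eq_of_zero_mem_connSeqLengths hℓ)
  · obtain ⟨Z, hZ, hZcard, hXZ, hZY⟩ := hP4.exists_adjCSconn_adjCSconn hconn hX hY hT
    refine ⟨succ_mem_connSeqLengths hX hZcard.symm hXZ
      (succ_mem_connSeqLengths hZ (hZcard.trans hcard) hZY (zero_mem_connSeqLengths_self hY)),
      fun ℓ hℓ => ?_⟩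
    rcases ℓ with _ | _ | ℓ
    · exact absurd (eq_of_zero_mem_connSeqLengths hℓ) hXY
    · exact absurd (rel_of_one_mem_connSeqLengths hℓ).2 hT
    · omega

/-- In a connected cograph, for connected subsets `X`, `Y` of equal size,
the CS-distance is `0` if `X = Y`, `1` if `X ≠ Y` and `X` touches `Y`, and `2`
otherwise; in particular `X` and `Y` are always reconfigurable under CS. -/
theorem stmt7 {V : Type*} [Fintype V] [DecidableEq V] (G : SimpleGraph V)
    (hconn : G.Connected) (hP4 : P4Free G) (X Y : Finset V)
    (hX : IsConnSub G X) (hY : IsConnSub G Y) (hcard : X.card = Y.card) :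
    (connSeqLengths G (adjCSconn G) X Y).Nonempty ∧
    sInf (connSeqLengths G (adjCSconn G) X Y) =
      (if X = Y then 0 else if Touches G X Y then 1 else 2) :=
  stmt7_general G hconn hP4 X Y hX hY hcard
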